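/- In the logic LDiiP, the modality M ⊩_a satisfies the 5-law (negative introspection): ⊢ ¬(M ⊩_a φ) → (M ⊩_a ¬(M ⊩_a φ)). Hence M ⊩_a is a KD45 modality. -/

import Mathlib

/-- Formulas of LDiiP over agents and messages. -/
inductive Fm (Agent Msg : Type) : Type where
  | atom : Nat → Fm Agent Msg
  | knows : Agent → Msg → Fm Agent Msg
  | bot : Fm Agent Msg
  | imp : Fm Agent Msg → Fm Agent Msg → Fm Agent Msg
  | and : Fm Agent Msg → Fm Agent Msg → Fm Agent Msg
  | or : Fm Agent Msg → Fm Agent Msg → Fm Agent Msg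
  | neg : Fm Agent Msg → Fm Agent Msg
  | proves : Msg → Agent → Fm Agent Msg → Fm Agent Msg

def Fm.iff {Agent Msg : Type} (p q : Fm Agent Msg) : Fm Agent Msg :=
  (p.imp q).and (q.imp p)

/-- Classical evaluation of a formula, treating atoms, knowledge atoms and
modal formulas as opaque propositions assigned by `v`. -/
def Fm.eval {Agent Msg : Type} (v : Fm Agent Msg → Prop) : Fm Agent Msg → Prop
  | .bot => False
  | .imp p q => Fm.eval v p → Fm.eval v q
  | .and p q => Fm.eval v p ∧ Fm.eval v q
  | .or p q => Fm.eval v p ∨ Fm.eval v q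
  | .neg p => ¬ Fm.eval v p
  | φ => v φ

/-- A classical (propositional) tautology schema. -/
def Fm.Taut {Agent Msg : Type} (φ : Fm Agent Msg) : Prop :=
  ∀ v, φ.eval v

/-- The logic LDiiP: a normal modal logic with proof modality `proves M a φ`
(`M ⊩_a φ`), containing all classical tautologies, with axioms of
self-knowledge, Kripke's law, epistemic truthfulness, proof consistency and
negation completeness, closed under modus ponens and necessitation. -/
structure LDiiP (Agent Msg : Type) where
  Thm : Fm Agent Msg → Prop
  taut : ∀ {φ : Fm Agent Msg}, φ.Taut → Thm φ
  mp : ∀ {φ ψ : Fm Agent Msg}, Thm (φ.imp ψ) → Thm φ → Thm ψ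
  nec : ∀ (M : Msg) (a : Agent) {φ : Fm Agent Msg}, Thm φ → Thm (.proves M a φ)
  selfKnow : ∀ (M : Msg) (a : Agent), Thm (.proves M a (.knows a M))
  kripke : ∀ (M : Msg) (a : Agent) (φ ψ : Fm Agent Msg),
    Thm ((Fm.proves M a (φ.imp ψ)).imp ((Fm.proves M a φ).imp (Fm.proves M a ψ)))
  epistemic : ∀ (M : Msg) (a : Agent) (φ : Fm Agent Msg),
    Thm ((Fm.proves M a φ).imp ((Fm.knows a M).imp φ))
  consistency : ∀ (M : Msg) (a : Agent), Thm (Fm.neg (Fm.proves M a Fm.bot))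
  negComplete : ∀ (M : Msg) (a : Agent) (φ : Fm Agent Msg),
    Thm ((Fm.proves M a φ).or (Fm.proves M a (Fm.neg φ)))

/-!
Write `K` for `knows a M` and `P` for `proves M a`. Epistemic truthfulness and negation
completeness say that, under `K`, `P ψ` holds exactly when `ψ` does. Since `P K` is an axiom,
any implication valid under `K` transfers into the modality: from `⊢ K → (ψ → χ)` we get
`⊢ P ψ → P χ`. Applied to `ψ → P ψ` this gives the 4-law, and applied to the contrapositive
`¬ψ → ¬P ψ` it gives `P ¬ψ → P ¬P ψ`, which with negation completeness is the 5-law.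
-/

namespace LDiiP

variable {Agent Msg : Type} (L : LDiiP Agent Msg)

theorem thm_of_taut_imp {φ ψ : Fm Agent Msg} (hφ : L.Thm φ) (h : (φ.imp ψ).Taut) :
    L.Thm ψ :=
  L.mp (L.taut h) hφ

theorem thm_of_taut_imp₂ {φ ψ χ : Fm Agent Msg} (hφ : L.Thm φ) (hψ : L.Thm ψ)
    (h : (φ.imp (ψ.imp χ)).Taut) : L.Thm χ :=
  L.mp (L.thm_of_taut_imp hφ h) hψ

variable (M : Msg) (a : Agent)

theorem proves_mono {ψ χ : Fm Agent Msg} (h : L.Thm (ψ.imp χ)) :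
    L.Thm ((Fm.proves M a ψ).imp (Fm.proves M a χ)) :=
  L.mp (L.kripke M a ψ χ) (L.nec M a h)

theorem proves_knows_imp (ψ : Fm Agent Msg) :
    L.Thm ((Fm.proves M a ((Fm.knows a M).imp ψ)).imp (Fm.proves M a ψ)) :=
  L.thm_of_taut_imp₂ (L.kripke M a (Fm.knows a M) ψ) (L.selfKnow M a) <| by
    intro v; simp only [Fm.eval]; tauto

theorem proves_mono_of_knows {ψ χ : Fm Agent Msg}
    (h : L.Thm ((Fm.knows a M).imp (ψ.imp χ))) :
    L.Thm ((Fm.proves M a ψ).imp (Fm.proves M a χ)) := by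
  have h' : L.Thm (ψ.imp ((Fm.knows a M).imp χ)) :=
    L.thm_of_taut_imp h <| by intro v; simp only [Fm.eval]; tauto
  exact L.thm_of_taut_imp₂ (L.proves_mono M a h') (L.proves_knows_imp M a χ) <| by
    intro v; simp only [Fm.eval]; tauto

theorem knows_imp_imp_proves (ψ : Fm Agent Msg) :
    L.Thm ((Fm.knows a M).imp (ψ.imp (Fm.proves M a ψ))) :=
  L.thm_of_taut_imp₂ (L.negComplete M a ψ) (L.epistemic M a (Fm.neg ψ)) <| by
    intro v; simp only [Fm.eval]; tauto

theorem four_law (ψ : Fm Agent Msg) :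
    L.Thm ((Fm.proves M a ψ).imp (Fm.proves M a (Fm.proves M a ψ))) :=
  L.proves_mono_of_knows M a (L.knows_imp_imp_proves M a ψ)

theorem proves_neg_imp_proves_neg_proves (ψ : Fm Agent Msg) :
    L.Thm ((Fm.proves M a (Fm.neg ψ)).imp (Fm.proves M a (Fm.neg (Fm.proves M a ψ)))) :=
  L.proves_mono_of_knows M a <| L.thm_of_taut_imp (L.epistemic M a ψ) <| by
    intro v; simp only [Fm.eval]; tauto

theorem five_law (ψ : Fm Agent Msg) :
    L.Thm ((Fm.neg (Fm.proves M a ψ)).imp (Fm.proves M a (Fm.neg (Fm.proves M a ψ)))) :=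
  L.thm_of_taut_imp₂ (L.negComplete M a ψ) (L.proves_neg_imp_proves_neg_proves M a ψ) <| by
    intro v; simp only [Fm.eval]; tauto

end LDiiP

/-- The 5-law (negative introspection): ⊢ ¬(M ⊩_a φ) → (M ⊩_a ¬(M ⊩_a φ));
together with the 4-law, so that `M ⊩_a` is a KD45 modality (K, D being axioms). -/
theorem ldiip_five_law {Agent Msg : Type} (L : LDiiP Agent Msg)
    (M : Msg) (a : Agent) (φ : Fm Agent Msg) :
    L.Thm ((Fm.neg (Fm.proves M a φ)).imp
        (Fm.proves M a (Fm.neg (Fm.proves M a φ)))) ∧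
    L.Thm ((Fm.proves M a φ).imp (Fm.proves M a (Fm.proves M a φ))) :=
  ⟨L.five_law M a φ, L.four_law M a φ⟩
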